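/- arXiv:1002.4289 — 4 statements merged into one kernel-verified Lean document; each statement's English description precedes it below -/
import Mathlib

section
/- Let \hat q(u) be a power series with nonnegative coefficients q_N ≤ C e^{-νN}, Σ q_N = 1, aperiodic, and μ = Σ N q_N. Define Δ(u) = [(\hat q(u) − 1) − μ(u−1)] / [(\hat q(u) − 1)·μ·(u−1)]. Then Δ extends to an analytic function on a disc of radius 1 + ν' for some ν' > 0; in particular Δ has a removable singularity at u = 1. -/
/-!
Writing `q̂(u) - 1 = (u - 1) h(u)` and `h(u) - μ = (u - 1) g(u)` with `h = dslope q̂ 1` and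
`g = dslope h 1`, the quotient `Δ` equals `g / (μ h)` away from `u = 1`. The exponential tail
makes `q̂`, hence `h` and `g`, holomorphic on a disc of radius `e^{ν/2} > 1`, and
`h(1) = q̂'(1) = μ`. On the closed unit disc `h` does not vanish: at `1` because
`μ ≥ ∑ q_N = 1`, elsewhere because `q̂(u) = 1` with `|u| ≤ 1` forces `u^N = 1` whenever
`q_N ≠ 0`, which aperiodicity excludes for `u ≠ 1`. By compactness `h` stays nonzero on a
slightly larger disc.
-/

open Metric

noncomputable def genFun (a : ℕ → ℂ) (u : ℂ) : ℂ := ∑' N : ℕ, u ^ N * a N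

lemma Complex.eq_one_of_re_eq_one_of_norm_le_one {z : ℂ} (hre : z.re = 1) (hz : ‖z‖ ≤ 1) :
    z = 1 := by
  have habs : |z.re| = ‖z‖ :=
    le_antisymm (Complex.abs_re_le_norm z) (by rw [hre, abs_one]; exact hz)
  exact Complex.ext hre (Complex.abs_re_eq_norm.1 habs)

lemma dslope_ne_zero {𝕜 E : Type*} [NontriviallyNormedField 𝕜] [NormedAddCommGroup E]
    [NormedSpace 𝕜 E] {f : 𝕜 → E} {c u : 𝕜} (hc : deriv f c ≠ 0) (hu : u ≠ c → f u ≠ f c) :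
    dslope f c u ≠ 0 := by
  rcases eq_or_ne u c with rfl | hne
  · rwa [dslope_same]
  · rw [dslope_of_ne _ hne, slope_def_module]
    exact smul_ne_zero (inv_ne_zero (sub_ne_zero.2 hne)) (sub_ne_zero.2 (hu hne))

lemma dslope_dslope_div_eq {𝕜 : Type*} [NontriviallyNormedField 𝕜] (f : 𝕜 → 𝕜) {c u : 𝕜}
    (hu : u ≠ c) :
    dslope (dslope f c) c u / (deriv f c * dslope f c u) =
      (f u - f c - deriv f c * (u - c)) / ((f u - f c) * deriv f c * (u - c)) := by
  have huc : u - c ≠ 0 := sub_ne_zero.2 hu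
  rw [dslope_of_ne _ hu, slope_def_field, dslope_same, dslope_of_ne _ hu, slope_def_field]
  set h := (f u - f c) / (u - c)
  have hf : f u - f c = (u - c) * h := by rw [mul_div_cancel₀ _ huc]
  rw [hf, div_div, show (u - c) * h - deriv f c * (u - c) = (u - c) * (h - deriv f c) by ring,
    show (u - c) * h * deriv f c * (u - c) = (u - c) * ((u - c) * (deriv f c * h)) by ring,
    mul_div_mul_left _ _ huc]

lemma exists_ball_subset_of_closedBall_subset {E F : Type*} [NormedAddCommGroup E]
    [NormedSpace ℝ E] [ProperSpace E] [TopologicalSpace F] [Zero F] [T1Space F]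
    {h : E → F} {V : Set E} (hV : IsOpen V) (hh : ContinuousOn h V) {x : E} {ρ : ℝ}
    (hρ : 0 ≤ ρ) (hsub : closedBall x ρ ⊆ V) (hne : ∀ u ∈ closedBall x ρ, h u ≠ 0) :
    ∃ δ > 0, ball x (ρ + δ) ⊆ V ∩ {u | h u ≠ 0} := by
  obtain ⟨δ, hδ, hthick⟩ := (isCompact_closedBall x ρ).exists_thickening_subset_open
    (hh.isOpen_inter_preimage hV isOpen_compl_singleton) fun u hu => ⟨hsub hu, hne u hu⟩
  exact ⟨δ, hδ, by rwa [thickening_closedBall hδ hρ, add_comm] at hthick⟩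

section ExponentialTail

variable {a : ℕ → ℂ} {C ν : ℝ}

lemma norm_pow_mul_le_of_norm_le_exp (ha : ∀ N : ℕ, ‖a N‖ ≤ C * Real.exp (-ν * N)) {u : ℂ}
    (hu : ‖u‖ ≤ Real.exp (ν / 2)) (N : ℕ) :
    ‖u ^ N * a N‖ ≤ C * Real.exp (-ν / 2) ^ N :=
  calc ‖u ^ N * a N‖ = ‖u‖ ^ N * ‖a N‖ := by rw [norm_mul, norm_pow]
    _ ≤ Real.exp (ν / 2) ^ N * (C * Real.exp (-ν * N)) :=
      mul_le_mul (pow_le_pow_left₀ (norm_nonneg u) hu N) (ha N) (norm_nonneg _) (by positivity)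
    _ = C * Real.exp (-ν / 2) ^ N := by
      rw [← Real.exp_nat_mul, ← Real.exp_nat_mul, mul_left_comm, ← Real.exp_add]
      ring_nf

lemma summable_mul_exp_neg_half_pow (hν : 0 < ν) :
    Summable fun N : ℕ => C * Real.exp (-ν / 2) ^ N :=
  (summable_geometric_of_lt_one (Real.exp_pos _).le
    (Real.exp_lt_one_iff.2 (by linarith))).mul_left C

variable (hν : 0 < ν) (ha : ∀ N : ℕ, ‖a N‖ ≤ C * Real.exp (-ν * N))
include hν ha

lemma differentiableOn_genFun : DifferentiableOn ℂ (genFun a) (ball 0 (Real.exp (ν / 2))) :=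
  Complex.differentiableOn_tsum_of_summable_norm (summable_mul_exp_neg_half_pow hν)
    (fun N => (by fun_prop : Differentiable ℂ fun w : ℂ => w ^ N * a N).differentiableOn)
    isOpen_ball fun N _ hw => norm_pow_mul_le_of_norm_le_exp ha (mem_ball_zero_iff.1 hw).le N

lemma hasSum_deriv_genFun_one : HasSum (fun N : ℕ => (N : ℂ) * a N) (deriv (genFun a) 1) := by
  have h1 : (1 : ℂ) ∈ ball 0 (Real.exp (ν / 2)) := by
    rw [mem_ball_zero_iff, norm_one]; exact Real.one_lt_exp_iff.2 (by linarith)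
  have hderiv (N : ℕ) : deriv (fun w : ℂ => w ^ N * a N) 1 = N * a N := by simp
  have := Complex.hasSum_deriv_of_summable_norm (summable_mul_exp_neg_half_pow hν)
    (fun N => (by fun_prop : Differentiable ℂ fun w : ℂ => w ^ N * a N).differentiableOn)
    isOpen_ball (fun N _ hw => norm_pow_mul_le_of_norm_le_exp ha (mem_ball_zero_iff.1 hw).le N) h1
  simp only [hderiv] at this
  exact this

end ExponentialTail

lemma eq_one_of_genFun_eq_one {q : ℕ → ℝ} (hqnn : ∀ N, 0 ≤ q N) (hq : HasSum q 1)
    (haper : ∀ d : ℕ, (∀ N : ℕ, q N ≠ 0 → d ∣ N) → d = 1) {u : ℂ} (hu : ‖u‖ ≤ 1)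
    (h : genFun (fun N => q N) u = 1) : u = 1 := by
  have hpow (N : ℕ) : ‖u ^ N‖ ≤ 1 := by
    rw [norm_pow]
    exact pow_le_one₀ (norm_nonneg u) hu
  have hS : HasSum (fun N => u ^ N * (q N : ℂ)) 1 := by
    refine h ▸ (Summable.of_norm_bounded hq.summable fun N => ?_).hasSum
    rw [norm_mul, Complex.norm_real, Real.norm_of_nonneg (hqnn N)]
    exact mul_le_of_le_one_left (hqnn N) (hpow N)
  have hre : HasSum (fun N => (u ^ N).re * q N) 1 := by
    simpa only [Complex.re_mul_ofReal, Complex.one_re] using Complex.hasSum_re hS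
  -- the real parts `Re u^N ≤ 1` average to `1` against `q`, so they equal `1` on its support
  have hdefect : HasSum (fun N => q N - (u ^ N).re * q N) 0 := by
    simpa only [sub_self] using hq.sub hre
  have hnn : ∀ N, 0 ≤ q N - (u ^ N).re * q N := fun N =>
    sub_nonneg.2 (mul_le_of_le_one_left (hqnn N) ((Complex.re_le_norm _).trans (hpow N)))
  have hroot : ∀ N : ℕ, q N ≠ 0 → u ^ N = 1 := by
    intro N hN
    have : q N - (u ^ N).re * q N = 0 := congrFun ((hasSum_zero_iff_of_nonneg hnn).1 hdefect) N
    refine Complex.eq_one_of_re_eq_one_of_norm_le_one ?_ (hpow N)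
    exact mul_right_cancel₀ hN (by linarith [this] : (u ^ N).re * q N = 1 * q N)
  exact orderOf_eq_one_iff.1 (haper _ fun N hN => orderOf_dvd_of_pow_eq_one (hroot N hN))

section RealCoefficients

variable {q : ℕ → ℝ} {C ν : ℝ} (hqnn : ∀ N, 0 ≤ q N)
  (hqtail : ∀ N : ℕ, q N ≤ C * Real.exp (-ν * N))
include hqnn hqtail

lemma norm_ofReal_le_of_le_exp (N : ℕ) : ‖(q N : ℂ)‖ ≤ C * Real.exp (-ν * N) := by
  rw [Complex.norm_real, Real.norm_of_nonneg (hqnn N)]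
  exact hqtail N

variable (hν : 0 < ν)
include hν

lemma summable_nat_mul_of_le_exp : Summable fun N : ℕ => (N : ℝ) * q N :=
  Complex.summable_ofReal.1 <| by
    exact_mod_cast (hasSum_deriv_genFun_one hν (norm_ofReal_le_of_le_exp hqnn hqtail)).summable

lemma deriv_genFun_ofReal_one :
    deriv (genFun fun N => (q N : ℂ)) 1 = ((∑' N : ℕ, (N : ℝ) * q N : ℝ) : ℂ) := by
  rw [Complex.ofReal_tsum,
    ← (hasSum_deriv_genFun_one hν (norm_ofReal_le_of_le_exp hqnn hqtail)).tsum_eq]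
  simp only [Complex.ofReal_mul, Complex.ofReal_natCast]

lemma deriv_genFun_ofReal_one_ne_zero (hq0 : q 0 = 0) (hq : HasSum q 1) :
    deriv (genFun fun N => (q N : ℂ)) 1 ≠ 0 := by
  have hmean : ∑' N, q N ≤ ∑' N : ℕ, (N : ℝ) * q N := by
    refine hq.summable.tsum_le_tsum (fun N => ?_) (summable_nat_mul_of_le_exp hqnn hqtail hν)
    rcases Nat.eq_zero_or_pos N with rfl | hN
    · simp [hq0]
    · exact le_mul_of_one_le_left (hqnn N) (by exact_mod_cast hN)
  rw [deriv_genFun_ofReal_one hqnn hqtail hν, Complex.ofReal_ne_zero]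
  linarith [hq.tsum_eq]

end RealCoefficients

/-- The error function `Δ(u) = [(q̂(u)-1) - μ(u-1)] / [(q̂(u)-1)·μ·(u-1)]` of the renewal
analysis extends to an analytic function on a disc of radius `1 + ν'` for some `ν' > 0`;
in particular it has a removable singularity at `u = 1`. -/
theorem stmt_3 (q : ℕ → ℝ) (C ν : ℝ) (hν : 0 < ν)
    (hq0 : q 0 = 0) (hqnn : ∀ N, 0 ≤ q N)
    (hqsum : ∑' N : ℕ, q N = 1)
    (hqtail : ∀ N : ℕ, q N ≤ C * Real.exp (-ν * N))
    (haper : ∀ d : ℕ, (∀ N : ℕ, q N ≠ 0 → d ∣ N) → d = 1) :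
    ∃ ν' > 0, ∃ F : ℂ → ℂ,
      DifferentiableOn ℂ F (ball (0 : ℂ) (1 + ν')) ∧
      ∀ u ∈ ball (0 : ℂ) (1 + ν'), u ≠ 1 →
        F u = (((∑' N : ℕ, u ^ N * (q N : ℂ)) - 1)
                - ((∑' N : ℕ, (N : ℝ) * q N : ℝ) : ℂ) * (u - 1)) /
              (((∑' N : ℕ, u ^ N * (q N : ℂ)) - 1)
                * ((∑' N : ℕ, (N : ℝ) * q N : ℝ) : ℂ) * (u - 1)) := by
  have hq : HasSum q 1 := by
    refine hqsum ▸ (Summable.hasSum ?_)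
    by_contra hs
    simp [tsum_eq_zero_of_not_summable hs] at hqsum
  set f := genFun fun N => (q N : ℂ)
  have ha := norm_ofReal_le_of_le_exp hqnn hqtail
  have hf1 : f 1 = 1 := by simp [f, genFun, ← Complex.ofReal_tsum, hqsum]
  have hμ0 : deriv f 1 ≠ 0 := deriv_genFun_ofReal_one_ne_zero hqnn hqtail hν hq0 hq
  have hR : closedBall (0 : ℂ) 1 ⊆ ball 0 (Real.exp (ν / 2)) :=
    closedBall_subset_ball (Real.one_lt_exp_iff.2 (by linarith))
  have hnhds : ball (0 : ℂ) (Real.exp (ν / 2)) ∈ nhds 1 := isOpen_ball.mem_nhds (hR (by simp))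
  have hh := (Complex.differentiableOn_dslope hnhds).2 (differentiableOn_genFun hν ha)
  have hg := (Complex.differentiableOn_dslope hnhds).2 hh
  obtain ⟨δ, hδ, hsub⟩ := exists_ball_subset_of_closedBall_subset isOpen_ball hh.continuousOn
    zero_le_one hR fun u hu => dslope_ne_zero hμ0 fun hu1 hfu => hu1 <|
      eq_one_of_genFun_eq_one hqnn hq haper (mem_closedBall_zero_iff.1 hu) (hfu.trans hf1)
  refine ⟨δ, hδ, fun u => dslope (dslope f 1) 1 u / (deriv f 1 * dslope f 1 u), ?_,
    fun u _ hu => ?_⟩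
  · exact (hg.mono fun u hu => (hsub hu).1).div ((hh.mono fun u hu => (hsub hu).1).const_mul _)
      fun u hu => mul_ne_zero hμ0 (hsub hu).2
  · beta_reduce
    rw [dslope_dslope_div_eq f hu, hf1, deriv_genFun_ofReal_one hqnn hqtail hν]
    rfl
end

section
/- Let (ξ_i)_{i≥1} be i.i.d. positive-integer-valued random variables with P(ξ > ℓ) ≤ C e^{-κℓ} for some κ > 0, and let S_m = ξ_1 + ··· + ξ_m. Then there exist ε > 0 and c > 0 such that for all B ∈ ℕ, Σ_{m=1}^{⌊εB⌋} E[ξ_m e^{η ξ_m}; S_m = B] ≤ C' e^{-cB}, uniformly in η sufficiently small. -/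
/-!
Fix `0 < t < κ`. The exponential tail makes `M = E[e^{t ξ}]` finite, so by Chernoff's bound
`P(S_m = B) ≤ P(S_m ≥ B) ≤ e^{-tB} M^m`, and `M^m ≤ e^{ε B log M}` for `m ≤ εB`. Choosing `ε`
with `ε log M ≤ t/4`, each summand is at most `B e^{ηB} e^{-(3t/4) B}`; there are at most `εB`
summands, and the polynomial factor `B²` is absorbed by a further `e^{(t/4) B}`.
-/

open MeasureTheory ProbabilityTheory Real Finset

section

variable {Ω : Type*} [MeasurableSpace Ω] {μ : Measure Ω}

lemma integrable_exp_mul_of_tail_le [IsFiniteMeasure μ] {X : Ω → ℕ} (hX : Measurable X)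
    {C κ t : ℝ} (htκ : t < κ) (htail : ∀ ℓ : ℕ, μ.real {ω | ℓ < X ω} ≤ C * exp (-κ * ℓ)) :
    Integrable (fun ω => exp (t * X ω)) μ := by
  have hlaw : Integrable (fun n : ℕ => exp (t * n)) (μ.map X) := by
    rw [← Measure.sum_smul_dirac (μ.map X), integrable_sum_dirac_iff fun _ => measure_ne_top _ _,
      ← summable_nat_add_iff 1]
    have hratio : exp (t - κ) < 1 := Real.exp_lt_one_iff.mpr (by linarith)
    have hgeom : Summable fun n : ℕ => C * exp t * exp (t - κ) ^ n :=
      (summable_geometric_of_lt_one (exp_nonneg _) hratio).mul_left _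
    refine hgeom.of_nonneg_of_le (fun _ => by positivity) fun n => ?_
    have hpoint : (μ.map X {n + 1}).toReal ≤ C * exp (-κ * n) := by
      rw [Measure.map_apply hX (measurableSet_singleton _)]
      refine le_trans (measureReal_mono fun ω (hω : X ω = n + 1) => ?_) (htail n)
      simp [hω]
    calc (μ.map X {n + 1}).toReal * ‖exp (t * ↑(n + 1))‖
        ≤ C * exp (-κ * n) * exp (t * ↑(n + 1)) := by
          rw [norm_of_nonneg (exp_nonneg _)]; gcongr
      _ = C * exp t * exp (t - κ) ^ n := by
          rw [← exp_nat_mul, mul_assoc, mul_assoc, ← exp_add, ← exp_add]; push_cast; ring_nf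
  exact (integrable_map_measure (by fun_prop) hX.aemeasurable).mp hlaw

lemma one_le_mgf [IsProbabilityMeasure μ] {X : Ω → ℝ} {t : ℝ} (h : ∀ ω, 0 ≤ t * X ω)
    (hint : Integrable (fun ω => exp (t * X ω)) μ) : 1 ≤ mgf X μ t :=
  calc (1 : ℝ) = ∫ _, (1 : ℝ) ∂μ := by simp
    _ ≤ mgf X μ t := integral_mono (integrable_const 1) hint fun ω => one_le_exp (h ω)

lemma measureReal_sum_eq_le_exp_mul_mgf_pow [IsProbabilityMeasure μ] {ξ : ℕ → Ω → ℕ}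
    (hmeas : ∀ i, Measurable (ξ i)) (hindep : iIndepFun ξ μ)
    (hident : ∀ i, IdentDistrib (ξ i) (ξ 0) μ μ) {t : ℝ} (ht : 0 ≤ t)
    (hint : Integrable (fun ω => exp (t * ξ 0 ω)) μ) (s : Finset ℕ) (B : ℕ) :
    μ.real {ω | ∑ k ∈ s, ξ k ω = B}
      ≤ exp (-t * B) * mgf (fun ω => (ξ 0 ω : ℝ)) μ t ^ #s := by
  set X : ℕ → Ω → ℝ := fun i ω => ξ i ω
  have hXident : ∀ i, IdentDistrib (X i) (X 0) μ μ := fun i => (hident i).comp measurable_from_top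
  have hXmeas : ∀ i, Measurable (X i) := fun i => measurable_from_top.comp (hmeas i)
  have hXindep : iIndepFun X μ := hindep.comp _ fun _ => measurable_from_top
  have hXint : ∀ i, Integrable (fun ω => exp (t * X i ω)) μ := fun i =>
    ((hXident i).comp (measurable_const_mul t).exp).integrable_iff.mpr hint
  have hsub : {ω | ∑ k ∈ s, ξ k ω = B} ⊆ {ω | (B : ℝ) ≤ (∑ k ∈ s, X k) ω} := fun ω hω => by
    simp [X, ← Nat.cast_sum, hω.symm]
  calc μ.real {ω | ∑ k ∈ s, ξ k ω = B}
      ≤ μ.real {ω | (B : ℝ) ≤ (∑ k ∈ s, X k) ω} := measureReal_mono hsub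
    _ ≤ exp (-t * B) * mgf (∑ k ∈ s, X k) μ t :=
      measure_ge_le_exp_mul_mgf _ ht (hXindep.integrable_exp_mul_sum hXmeas fun i _ => hXint i)
    _ = exp (-t * B) * mgf (X 0) μ t ^ #s := by
      rw [hXindep.mgf_sum hXmeas,
        prod_congr rfl fun i _ => mgf_congr_of_identDistrib _ _ (hXident i) t, prod_const]

lemma setIntegral_mul_exp_le_of_sum_eq [IsFiniteMeasure μ] {ξ : ℕ → Ω → ℕ} {s : Finset ℕ} {m : ℕ}
    (hm : m ∈ s) {η : ℝ} (hη : 0 ≤ η) (B : ℕ) :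
    ∫ ω in {ω | ∑ k ∈ s, ξ k ω = B}, (ξ m ω : ℝ) * exp (η * ξ m ω) ∂μ
      ≤ B * exp (η * B) * μ.real {ω | ∑ k ∈ s, ξ k ω = B} := by
  refine (le_norm_self _).trans (norm_setIntegral_le_of_norm_le_const (measure_lt_top _ _) ?_)
  rintro ω (hω : ∑ k ∈ s, ξ k ω = B)
  have hξB : (ξ m ω : ℝ) ≤ B := by
    rw [← hω]; exact_mod_cast single_le_sum (fun k _ => Nat.zero_le (ξ k ω)) hm
  rw [norm_of_nonneg (by positivity)]
  gcongr

lemma sq_le_mul_exp {a x : ℝ} (ha : 0 < a) (hx : 0 ≤ x) : x ^ 2 ≤ (2 / a) ^ 2 * exp (a * x) := by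
  have hlin : x ≤ 2 / a * exp (a * x / 2) := by
    have := add_one_le_exp (a * x / 2)
    rw [div_mul_eq_mul_div, le_div_iff₀ ha]
    nlinarith
  calc x ^ 2 ≤ (2 / a * exp (a * x / 2)) ^ 2 := by gcongr
    _ = (2 / a) ^ 2 * exp (a * x) := by rw [mul_pow, ← exp_nat_mul]; ring_nf

end

theorem stmt_7_general {Ω : Type*} [MeasurableSpace Ω] (μ : Measure Ω) [IsProbabilityMeasure μ]
    (ξ : ℕ → Ω → ℕ) (hmeas : ∀ i, Measurable (ξ i))
    (hindep : iIndepFun ξ μ)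
    (hident : ∀ i, IdentDistrib (ξ i) (ξ 0) μ μ)
    (C κ : ℝ) (hκ : 0 < κ)
    (htail : ∀ ℓ : ℕ, (μ {ω | ℓ < ξ 0 ω}).toReal ≤ C * Real.exp (-κ * ℓ)) :
    ∃ ε > (0 : ℝ), ∃ c > (0 : ℝ), ∃ η₀ > (0 : ℝ), ∃ C' : ℝ,
      ∀ η ∈ Set.Icc (0 : ℝ) η₀, ∀ B : ℕ,
        (∑ m ∈ Finset.Icc 1 ⌊ε * B⌋₊,
          ∫ ω in {ω | (∑ k ∈ Finset.Icc 1 m, ξ k ω) = B},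
            (ξ m ω : ℝ) * Real.exp (η * ξ m ω) ∂μ)
          ≤ C' * Real.exp (-c * B) := by
  obtain ⟨t, ht, htκ⟩ : ∃ t, 0 < t ∧ t < κ := ⟨κ / 2, by positivity, by linarith⟩
  have hint := integrable_exp_mul_of_tail_le (hmeas 0) htκ htail
  set M := mgf (fun ω => (ξ 0 ω : ℝ)) μ t
  have hM : 1 ≤ M := one_le_mgf (fun ω => by positivity) hint
  have hL : 0 ≤ log M := log_nonneg hM
  set ε := t / (4 * (log M + 1))
  have hε : 0 < ε := by positivity
  have hεM : ε * log M ≤ t / 4 := by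
    rw [div_mul_eq_mul_div, div_le_div_iff₀ (by positivity) (by positivity)]
    nlinarith
  refine ⟨ε, hε, t / 4, by positivity, t / 4, by positivity, ε * (8 / t) ^ 2, ?_⟩
  rintro η ⟨hη0, hη⟩ B
  have hεB : (⌊ε * B⌋₊ : ℝ) ≤ ε * B := Nat.floor_le (by positivity)
  have hterm : ∀ m ∈ Icc 1 ⌊ε * B⌋₊,
      ∫ ω in {ω | ∑ k ∈ Icc 1 m, ξ k ω = B}, (ξ m ω : ℝ) * exp (η * ξ m ω) ∂μ
        ≤ B * exp (η * B) * exp ((ε * log M - t) * B) := by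
    intro m hm
    have hmB : (m : ℝ) ≤ ε * B := le_trans (by exact_mod_cast (mem_Icc.mp hm).2) hεB
    have hMm : M ^ m ≤ exp (ε * B * log M) :=
      calc M ^ m = exp (m * log M) := by rw [exp_nat_mul, exp_log (by linarith)]
        _ ≤ exp (ε * B * log M) := by gcongr
    refine (setIntegral_mul_exp_le_of_sum_eq (right_mem_Icc.mpr (mem_Icc.mp hm).1) hη0 B).trans ?_
    gcongr
    refine (measureReal_sum_eq_le_exp_mul_mgf_pow hmeas hindep hident ht.le hint _ B).trans ?_
    rw [Nat.card_Icc, Nat.add_sub_cancel,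
      show (ε * log M - t) * B = -t * B + ε * B * log M by ring, exp_add]
    gcongr
  calc _ ≤ ⌊ε * B⌋₊ * (B * exp (η * B) * exp ((ε * log M - t) * B)) := by
        simpa using sum_le_card_nsmul _ _ _ hterm
    _ ≤ ε * B * (B * exp (η * B) * exp ((ε * log M - t) * B)) := by gcongr
    _ = ε * (B : ℝ) ^ 2 * exp ((η + ε * log M - t) * B) := by
        rw [add_sub_assoc, add_mul, exp_add]; ring
    _ ≤ ε * ((8 / t) ^ 2 * exp (t / 4 * B)) * exp (-(t / 2) * B) := by
        have hsq := sq_le_mul_exp (a := t / 4) (by positivity) (Nat.cast_nonneg B)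
        rw [show 2 / (t / 4) = 8 / t by ring] at hsq
        gcongr
        linarith
    _ = ε * (8 / t) ^ 2 * exp (-(t / 4) * B) := by
        rw [mul_assoc, mul_assoc, ← exp_add]; ring_nf

/-- Large-deviation estimate for renewal counts: if `(ξ_i)` are i.i.d. positive-integer
random variables with exponential tails, then there are `ε > 0` and `c > 0` such that,
uniformly in `η` sufficiently small and in `B`,
`Σ_{m=1}^{⌊εB⌋} E[ξ_m e^{η ξ_m}; ξ_1 + … + ξ_m = B] ≤ C' e^{-cB}`. -/
theorem stmt_7 {Ω : Type*} [MeasurableSpace Ω] (μ : Measure Ω) [IsProbabilityMeasure μ]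
    (ξ : ℕ → Ω → ℕ) (hmeas : ∀ i, Measurable (ξ i))
    (hindep : iIndepFun ξ μ)
    (hident : ∀ i, IdentDistrib (ξ i) (ξ 0) μ μ)
    (hpos : ∀ i ω, 1 ≤ ξ i ω)
    (C κ : ℝ) (hκ : 0 < κ)
    (htail : ∀ ℓ : ℕ, (μ {ω | ℓ < ξ 0 ω}).toReal ≤ C * Real.exp (-κ * ℓ)) :
    ∃ ε > (0 : ℝ), ∃ c > (0 : ℝ), ∃ η₀ > (0 : ℝ), ∃ C' : ℝ,
      ∀ η ∈ Set.Icc (0 : ℝ) η₀, ∀ B : ℕ,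
        (∑ m ∈ Finset.Icc 1 ⌊ε * B⌋₊,
          ∫ ω in {ω | (∑ k ∈ Finset.Icc 1 m, ξ k ω) = B},
            (ξ m ω : ℝ) * Real.exp (η * ξ m ω) ∂μ)
          ≤ C' * Real.exp (-c * B) :=
  stmt_7_general μ ξ hmeas hindep hident C κ hκ htail
end

section
/- Let I : ℕ → [0,∞) satisfy I(B) ≤ C B^{-d/2} with d ≥ 3. Then for all sufficiently small η > 0: Σ_{n≥1} (e^η − 1)^{n−1} Σ_{B_1,…,B_n ≥ 1, Σ B_i > K} Π_{i=1}^n I(B_i) ≤ C' (1+K)^{1−d/2}, uniformly in K ≥ 0. -/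
/-!
If `Σ Bᵢ > K` then some bubble has `(n + 1) B_j > K`. Summing over the position `j` and factorising
the remaining sums bounds the `n`-bubble sum by `(n + 1) τ σⁿ`, where `σ = Σ_{b ≥ 1} I b < ∞` and
`τ = Σ_{(n+1) b > K} I b ≲ (n + 1)^{d/2 - 1} (1 + K)^{1 - d/2}` by the integral test for `b^{-d/2}`.
Since `n + 1 ≤ 2ⁿ`, the `n`-th term of the series is then `≲ (1 + K)^{1 - d/2} (c (e^η - 1))ⁿ` for a
constant `c`, which is summable uniformly in `K` once `c (e^η - 1) ≤ 1/2`.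
-/

open scoped ENNReal
open Finset Set

theorem ENNReal.tsum_pi_fin_prod {β : Type*} :
    ∀ {m : ℕ} (f : Fin m → β → ℝ≥0∞), ∑' B : Fin m → β, ∏ i, f i (B i) = ∏ i, ∑' b, f i b
  | 0, f => by simp
  | m + 1, f => by
    rw [← (Fin.consEquiv fun _ => β).tsum_eq, ENNReal.tsum_prod']
    simp [Fin.consEquiv, Fin.prod_univ_succ, ENNReal.tsum_mul_left, ENNReal.tsum_mul_right,
      ENNReal.tsum_pi_fin_prod]

theorem tsum_le_of_tsum_ofReal_le {α : Type*} {f : α → ℝ} (hf : ∀ a, 0 ≤ f a) {c : ℝ}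
    (hc : 0 ≤ c) (h : ∑' a, ENNReal.ofReal (f a) ≤ ENNReal.ofReal c) : ∑' a, f a ≤ c := by
  have : ∑' a, f a = (∑' a, ENNReal.ofReal (f a)).toReal := by
    rw [ENNReal.tsum_toReal_eq fun _ => ENNReal.ofReal_ne_top]
    exact tsum_congr fun a => (ENNReal.toReal_ofReal (hf a)).symm
  exact this ▸ ENNReal.toReal_le_of_le_ofReal hc h

theorem tsum_le_two_mul_of_le_geometric {f : ℕ → ℝ} {c : ℝ} (hf : ∀ n, 0 ≤ f n)
    (h : ∀ n, f n ≤ c * (1 / 2) ^ n) : ∑' n, f n ≤ 2 * c := by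
  have hsum : Summable fun n : ℕ => c * (1 / 2 : ℝ) ^ n := summable_geometric_two.mul_left c
  calc ∑' n, f n ≤ ∑' n : ℕ, c * (1 / 2 : ℝ) ^ n :=
        Summable.tsum_le_tsum h (hsum.of_nonneg_of_le hf h) hsum
    _ = 2 * c := by rw [tsum_mul_left, tsum_geometric_two, mul_comm]

theorem exists_lt_card_mul_of_lt_sum {ι : Type*} [Fintype ι] {B : ι → ℕ} {K : ℕ}
    (h : K < ∑ i, B i) : ∃ j, K < Fintype.card ι * B j := by
  obtain ⟨i, -, -⟩ := Finset.exists_ne_zero_of_sum_ne_zero ((Nat.zero_le K).trans_lt h).ne'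
  have hcard : 0 < Fintype.card ι := Fintype.card_pos_iff.mpr ⟨i⟩
  have : ∑ _i : ι, K < ∑ j, Fintype.card ι * B j := by
    rw [sum_const, card_univ, smul_eq_mul, ← mul_sum]
    exact Nat.mul_lt_mul_of_pos_left h hcard
  simpa using Finset.exists_lt_of_sum_lt this

theorem tsum_ite_lt_sum_prod_le (g : ℕ → ℝ≥0∞) (K n : ℕ) :
    ∑' B : Fin (n + 1) → ℕ, (if K < ∑ i, B i then ∏ i, g (B i) else 0) ≤
      (n + 1) * ((∑' b, if K < (n + 1) * b then g b else 0) * (∑' b, g b) ^ n) := by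
  set τ : ℕ → ℝ≥0∞ := fun b => if K < (n + 1) * b then g b else 0
  have hpt : ∀ B : Fin (n + 1) → ℕ, (if K < ∑ i, B i then ∏ i, g (B i) else 0) ≤
      ∑ j, ∏ i, (if i = j then τ else g) (B i) := by
    intro B
    split_ifs with hB
    · obtain ⟨j, hj⟩ := exists_lt_card_mul_of_lt_sum hB
      rw [Fintype.card_fin] at hj
      calc ∏ i, g (B i) = ∏ i, (if i = j then τ else g) (B i) :=
            prod_congr rfl fun i _ => by by_cases hij : i = j <;> simp [τ, hij, hj]
        _ ≤ _ := single_le_sum (f := fun j => ∏ i, (if i = j then τ else g) (B i))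
              (fun _ _ => zero_le) (mem_univ j)
    · exact zero_le
  calc _ ≤ ∑' B : Fin (n + 1) → ℕ, ∑ j, ∏ i, (if i = j then τ else g) (B i) :=
        ENNReal.tsum_le_tsum hpt
    _ = ∑ j : Fin (n + 1), ∏ i, ∑' b, (if i = j then τ else g) b := by
        rw [Summable.tsum_finsetSum fun _ _ => ENNReal.summable]
        simp only [ENNReal.tsum_pi_fin_prod]
    _ = ∑ _j : Fin (n + 1), (∑' b, τ b) * (∑' b, g b) ^ n := by
        refine sum_congr rfl fun j _ => ?_
        rw [Fin.prod_univ_succAbove _ j]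
        simp [Fin.succAbove_ne]
    _ = _ := by simp

theorem summable_nat_add_rpow_neg {p : ℝ} (hp : 1 < p) (m : ℕ) :
    Summable fun n : ℕ => ((n + m + 1 : ℕ) : ℝ) ^ (-p) :=
  (summable_nat_add_iff (f := fun n : ℕ => (n : ℝ) ^ (-p)) (m + 1)).mpr
    (Real.summable_nat_rpow.mpr (by linarith)) |>.congr fun n => by push_cast; ring_nf

theorem tsum_nat_rpow_neg_tail_le {p : ℝ} (hp : 1 < p) (m : ℕ) :
    ∑' n : ℕ, ((n + m + 1 : ℕ) : ℝ) ^ (-p) ≤ p / (p - 1) * (1 + m) ^ (1 - p) := by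
  have hanti : AntitoneOn (fun x : ℝ => x ^ (-p)) (Ici ((m + 1 : ℕ) : ℝ)) := fun x hx y _ hxy =>
    Real.rpow_le_rpow_of_nonpos (lt_of_lt_of_le (by positivity) hx) hxy (by linarith)
  have hint : ∑' n : ℕ, ((n + (m + 1) + 1 : ℕ) : ℝ) ^ (-p) ≤ (1 + m) ^ (1 - p) / (p - 1) := by
    refine (hanti.tsum_comp_add_le_integral (m + 1) ?_ ?_).trans_eq ?_
    · exact integrableOn_Ioi_rpow_of_lt (by linarith) (by positivity)
    · exact fun t ht => Real.rpow_nonneg (lt_trans (by positivity) ht).le _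
    · rw [integral_Ioi_rpow_of_lt (by linarith) (by positivity)]
      push_cast
      rw [show -p + 1 = 1 - p by ring, add_comm (m : ℝ), neg_div, ← div_neg, neg_sub]
  have hfirst : ((1 + m : ℕ) : ℝ) ^ (-p) ≤ (1 + m) ^ (1 - p) := by
    push_cast
    exact Real.rpow_le_rpow_of_exponent_le (by linarith [(m.cast_nonneg : (0 : ℝ) ≤ m)]) (by linarith)
  -- Split off the first term: the integral test then runs over `(m + 1, ∞)`, away from `0`.
  rw [(summable_nat_add_rpow_neg hp m).tsum_eq_zero_add]
  calc _ ≤ (1 + m : ℝ) ^ (1 - p) + (1 + m) ^ (1 - p) / (p - 1) := by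
        gcongr
        · simpa [add_comm] using hfirst
        · exact le_of_eq_of_le (tsum_congr fun n => by ring_nf) hint
    _ = _ := by field_simp [show p - 1 ≠ 0 by linarith]; ring

theorem tsum_ite_lt_le_of_le_rpow {p C : ℝ} (hp : 1 < p) (hC : 0 ≤ C) {g : ℕ → ℝ≥0∞}
    (hg : ∀ b, 1 ≤ b → g b ≤ ENNReal.ofReal (C * (b : ℝ) ^ (-p))) (m : ℕ) :
    ∑' b, (if m < b then g b else 0) ≤ ENNReal.ofReal (C * (p / (p - 1)) * (1 + m) ^ (1 - p)) := by
  have hreindex : ∑' b, (if m < b then g b else 0) = ∑' n, g (n + m + 1) := by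
    rw [← (add_left_injective (m + 1)).tsum_eq]
    · exact tsum_congr fun c => by rw [if_pos (by omega), add_assoc]
    · intro b hb
      have : m < b := by by_contra h; simp [h] at hb
      exact ⟨b - (m + 1), by simp; omega⟩
  calc ∑' b, (if m < b then g b else 0)
      ≤ ∑' n : ℕ, ENNReal.ofReal C * ENNReal.ofReal (((n + m + 1 : ℕ) : ℝ) ^ (-p)) := by
        rw [hreindex]
        exact ENNReal.tsum_le_tsum fun n => (hg _ (by omega)).trans_eq (ENNReal.ofReal_mul hC)
    _ = ENNReal.ofReal (C * ∑' n : ℕ, ((n + m + 1 : ℕ) : ℝ) ^ (-p)) := by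
        rw [ENNReal.tsum_mul_left, ENNReal.ofReal_mul hC,
          ENNReal.ofReal_tsum_of_nonneg (fun _ => by positivity) (summable_nat_add_rpow_neg hp m)]
    _ ≤ _ := by
        rw [mul_assoc]
        gcongr
        exact tsum_nat_rpow_neg_tail_le hp m

theorem one_add_nat_div_rpow_le (K n : ℕ) {s : ℝ} (hs : s ≤ 0) :
    (1 + (K / (n + 1) : ℕ) : ℝ) ^ s ≤ ((n : ℝ) + 1) ^ (-s) * (1 + K) ^ s := by
  have hK : (1 + K : ℝ) ≤ (n + 1) * (1 + (K / (n + 1) : ℕ)) := by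
    have h : K < (n + 1) * (K / (n + 1) + 1) := Nat.lt_mul_div_succ K n.succ_pos
    exact_mod_cast (by rw [add_comm 1 (K / (n + 1))]; omega : 1 + K ≤ (n + 1) * (1 + K / (n + 1)))
  have := Real.rpow_le_rpow_of_nonpos (by positivity) hK hs
  rw [Real.mul_rpow (by positivity) (by positivity)] at this
  rw [Real.rpow_neg (by positivity), ← div_eq_inv_mul, le_div_iff₀' (by positivity)]
  exact this

theorem tsum_ite_lt_mul_le_of_le_rpow {p C : ℝ} (hp : 1 < p) (hC : 0 ≤ C) {g : ℕ → ℝ≥0∞}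
    (hg : ∀ b, 1 ≤ b → g b ≤ ENNReal.ofReal (C * (b : ℝ) ^ (-p))) (K n : ℕ) :
    ∑' b, (if K < (n + 1) * b then g b else 0) ≤
      ENNReal.ofReal (C * (p / (p - 1)) * ((n + 1) ^ (p - 1) * (1 + K) ^ (1 - p))) := by
  simp_rw [mul_comm (n + 1), ← Nat.div_lt_iff_lt_mul n.succ_pos]
  refine (tsum_ite_lt_le_of_le_rpow hp hC hg _).trans (ENNReal.ofReal_le_ofReal ?_)
  have := one_add_nat_div_rpow_le K n (s := 1 - p) (by linarith)
  rw [neg_sub] at this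
  gcongr

theorem add_one_rpow_le_two_rpow_pow (n : ℕ) {p : ℝ} (hp : 0 ≤ p) :
    ((n : ℝ) + 1) ^ p ≤ ((2 : ℝ) ^ p) ^ n := by
  rw [← Real.rpow_mul_natCast (by norm_num), mul_comm, Real.rpow_natCast_mul (by norm_num)]
  gcongr
  exact_mod_cast Nat.lt_two_pow_self

theorem exists_pos_forall_exp_sub_one_mul_le {a : ℝ} (ha : 0 ≤ a) :
    ∃ η₀ > 0, ∀ η ≤ η₀, (Real.exp η - 1) * a ≤ 1 / 2 := by
  have hr : (0 : ℝ) < 1 / (2 * (a + 1)) := by positivity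
  refine ⟨Real.log (1 + 1 / (2 * (a + 1))), Real.log_pos (by linarith), fun η hη => ?_⟩
  have : Real.exp η - 1 ≤ 1 / (2 * (a + 1)) := by
    have := Real.exp_le_exp.mpr hη
    rw [Real.exp_log (by linarith)] at this
    linarith
  calc (Real.exp η - 1) * a ≤ 1 / (2 * (a + 1)) * a := by gcongr
    _ ≤ 1 / 2 := by rw [div_mul_eq_mul_div, div_le_div_iff₀ (by positivity) (by norm_num)]; linarith

noncomputable def bubbleSum (I : ℕ → ℝ) (K n : ℕ) : ℝ :=
  ∑' B : Fin (n + 1) → ℕ, if (∀ i, 1 ≤ B i) ∧ K < ∑ i, B i then ∏ i, I (B i) else 0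

theorem bubbleSum_nonneg {I : ℕ → ℝ} (hI : ∀ b, 0 ≤ I b) (K n : ℕ) : 0 ≤ bubbleSum I K n :=
  tsum_nonneg fun B => by split_ifs <;> first | positivity | exact prod_nonneg fun i _ => hI _

theorem bubbleSum_le {p C : ℝ} (hp : 1 < p) {I : ℕ → ℝ} (hI₀ : ∀ b, 0 ≤ I b)
    (hI : ∀ b : ℕ, 1 ≤ b → I b ≤ C * (b : ℝ) ^ (-p)) (K n : ℕ) :
    bubbleSum I K n ≤ (C * (p / (p - 1))) ^ (n + 1) * ((n + 1) ^ p * (1 + K) ^ (1 - p)) := by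
  have hC : 0 ≤ C := (hI₀ 1).trans (by simpa using hI 1 le_rfl)
  set g : ℕ → ℝ≥0∞ := fun b => if 1 ≤ b then ENNReal.ofReal (I b) else 0
  have hg : ∀ b, 1 ≤ b → g b ≤ ENNReal.ofReal (C * (b : ℝ) ^ (-p)) := fun b hb => by
    simpa [g, hb] using ENNReal.ofReal_le_ofReal (hI b hb)
  have hσ : ∑' b, g b ≤ ENNReal.ofReal (C * (p / (p - 1))) := by
    calc ∑' b, g b = ∑' b, (if 0 < b then g b else 0) :=
          tsum_congr fun b => by rcases b with _ | b <;> simp [g]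
      _ ≤ _ := by simpa using tsum_ite_lt_le_of_le_rpow hp hC hg 0
  have hofReal : ∀ B : Fin (n + 1) → ℕ,
      ENNReal.ofReal (if (∀ i, 1 ≤ B i) ∧ K < ∑ i, B i then ∏ i, I (B i) else 0) =
        if K < ∑ i, B i then ∏ i, g (B i) else 0 := fun B => by
    simp only [g, Fintype.prod_ite_zero, ite_and]
    split_ifs <;> simp [ENNReal.ofReal_prod_of_nonneg, hI₀]
  have hAp : (n + 1 : ℝ) * (n + 1) ^ (p - 1) = (n + 1) ^ p := by
    rw [Real.rpow_sub_one (by positivity), mul_div_cancel₀ _ (by positivity)]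
  refine tsum_le_of_tsum_ofReal_le (fun B => ?_) (by positivity) ?_
  · split_ifs <;> first | positivity | exact prod_nonneg fun i _ => hI₀ _
  simp_rw [hofReal]
  calc _ ≤ (n + 1) * ((∑' b, if K < (n + 1) * b then g b else 0) * (∑' b, g b) ^ n) :=
        tsum_ite_lt_sum_prod_le g K n
    _ ≤ ENNReal.ofReal (n + 1) * (ENNReal.ofReal (C * (p / (p - 1)) *
          ((n + 1) ^ (p - 1) * (1 + K) ^ (1 - p))) * ENNReal.ofReal (C * (p / (p - 1))) ^ n) := by
        gcongr
        · rw [← Nat.cast_add_one (R := ℝ), ENNReal.ofReal_natCast]; push_cast; exact le_rfl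
        · exact tsum_ite_lt_mul_le_of_le_rpow hp hC hg K n
    _ = _ := by
        have hA : 0 ≤ C * (p / (p - 1)) := mul_nonneg hC (div_nonneg (by linarith) (by linarith))
        rw [← ENNReal.ofReal_pow hA, ← ENNReal.ofReal_mul (by positivity),
          ← ENNReal.ofReal_mul (by positivity), ← hAp]
        ring_nf

/-- Bubble-summation estimate: if `I(B) ≤ C B^{-d/2}` with `d ≥ 3`, then for all
sufficiently small `η > 0` the sum over the number of bubbles `n` and over bubble spans
`B_1,…,B_n ≥ 1` with `Σ B_i > K` of `(e^η - 1)^{n-1} Π I(B_i)` is at most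
`C' (1+K)^{1-d/2}`, uniformly in `K ≥ 0`. -/
theorem stmt_9 (d : ℕ) (hd : 3 ≤ d) (I : ℕ → ℝ) (hInn : ∀ B, 0 ≤ I B)
    (C : ℝ) (hI : ∀ B : ℕ, 1 ≤ B → I B ≤ C * (B : ℝ) ^ (-(d : ℝ) / 2)) :
    ∃ η₀ > 0, ∀ η : ℝ, 0 < η → η ≤ η₀ → ∃ C' : ℝ, ∀ K : ℕ,
      (∑' n : ℕ, (Real.exp η - 1) ^ n *
        ∑' B : Fin (n + 1) → ℕ,
          (if (∀ i, 1 ≤ B i) ∧ K < ∑ i, B i then ∏ i, I (B i) else 0))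
        ≤ C' * ((1 : ℝ) + K) ^ ((1 : ℝ) - (d : ℝ) / 2) := by
  set p : ℝ := d / 2
  have hp : 1 < p := by
    show 1 < (d : ℝ) / 2
    have : (3 : ℝ) ≤ d := mod_cast hd
    linarith
  have hC : 0 ≤ C := (hInn 1).trans (by simpa using hI 1 le_rfl)
  set A := C * (p / (p - 1))
  have hA : 0 ≤ A := mul_nonneg hC (div_nonneg (by linarith) (by linarith))
  obtain ⟨η₀, hη₀, hsmall⟩ := exists_pos_forall_exp_sub_one_mul_le (a := 2 ^ p * A) (by positivity)
  refine ⟨η₀, hη₀, fun η hη hηη₀ => ⟨2 * A, fun K => ?_⟩⟩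
  have hε : 0 ≤ Real.exp η - 1 := by linarith [Real.add_one_le_exp η]
  have hbubble : ∀ n : ℕ, bubbleSum I K n ≤ A ^ (n + 1) * ((n + 1) ^ p * (1 + K) ^ (1 - p)) :=
    bubbleSum_le hp hInn (fun b hb => by rw [neg_div] at hI; exact hI b hb) K
  have hterm : ∀ n : ℕ, (Real.exp η - 1) ^ n * bubbleSum I K n ≤
      A * (1 + K) ^ (1 - p) * (1 / 2) ^ n := fun n => calc
    _ ≤ (Real.exp η - 1) ^ n * (A ^ (n + 1) * ((2 ^ p) ^ n * (1 + K) ^ (1 - p))) := by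
        grw [hbubble n, add_one_rpow_le_two_rpow_pow n (by linarith : 0 ≤ p)]
    _ = A * (1 + K) ^ (1 - p) * ((Real.exp η - 1) * (2 ^ p * A)) ^ n := by
        rw [mul_pow, mul_pow]; ring
    _ ≤ _ := by gcongr; exact hsmall η hηη₀
  have hnonneg : ∀ n : ℕ, 0 ≤ (Real.exp η - 1) ^ n * bubbleSum I K n :=
    fun n => mul_nonneg (pow_nonneg hε n) (bubbleSum_nonneg hInn K n)
  rw [mul_assoc]
  exact tsum_le_two_mul_of_le_geometric hnonneg hterm
end

section
/- Let I : ℕ → [0,∞) satisfy I(B) ≤ C B^{-d/2} with d ≥ 3, and ν > η > 0. Then Σ_{t≥1} e^{-(ν−η)t} Σ_{i₀≥1} (e^η − 1)^{i₀} Σ_{B_1,…,B_{i₀} ≥ 1, Σ B_i = K + t} Π_{i=1}^{i₀} B_i^{-d/2} ≤ C' (1+K)^{-d/2}, uniformly in K ≥ 0, for all sufficiently small η. -/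
/-!
Put `s = d / 2 > 1`. Since the larger of `a, b` is at least `(a + b) / 2`,
`∑_{a+b=n} a^{-s} b^{-s} ≤ A n^{-s}` with `A = 2^{s+1} ∑ m^{-s}`, and by induction the sum of
`∏ B_i^{-s}` over compositions of `n` into `j + 1` parts is at most `A^j n^{-s}`. Once
`e^η - 1 ≤ 1 / (2A)`, the series over `j` is dominated by a geometric series of ratio `≤ 1/2`,
so it is at most `2 (e^η - 1) (K + t)^{-s} ≤ 2 (e^η - 1) (1 + K)^{-s}` for `t ≥ 1`, and the
series over `t` is geometric of ratio `e^{-(ν - η)} < 1`.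
-/

open Finset Real

theorem Finset.Nat.sum_antidiagonalTuple_succ {M : Type*} [AddCommMonoid M] (k n : ℕ)
    (f : (Fin (k + 1) → ℕ) → M) :
    ∑ B ∈ antidiagonalTuple (k + 1) n, f B =
      ∑ p ∈ antidiagonal n, ∑ x ∈ antidiagonalTuple k p.2, f (Fin.cons p.1 x) := by
  rw [Finset.sum_sigma']
  symm
  refine Finset.sum_bij' (fun q _ => Fin.cons q.1.1 q.2) (fun B _ => ⟨(B 0, n - B 0), Fin.tail B⟩)
    ?_ ?_ ?_ ?_ (fun _ _ => rfl)
  · rintro ⟨⟨a, m⟩, x⟩ h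
    simp only [mem_sigma, HasAntidiagonal.mem_antidiagonal, mem_antidiagonalTuple] at h ⊢
    rw [Fin.sum_cons, h.2, h.1]
  · intro B h
    simp only [mem_sigma, HasAntidiagonal.mem_antidiagonal, mem_antidiagonalTuple] at h ⊢
    rw [Fin.sum_univ_succ] at h
    exact ⟨by omega, by simp only [Fin.tail]; omega⟩
  · rintro ⟨⟨a, m⟩, x⟩ h
    simp only [mem_sigma, HasAntidiagonal.mem_antidiagonal] at h
    simp [← h.1]
  · intro B _
    simp

namespace BubbleSum

lemma mul_rpow_neg_le {s a b : ℝ} (hs : 0 < s) (ha : 0 ≤ a) (hb : 0 ≤ b) :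
    a ^ (-s) * b ^ (-s) ≤ 2 ^ s * (a + b) ^ (-s) * (a ^ (-s) + b ^ (-s)) := by
  wlog hab : a ≤ b generalizing a b
  · have := this hb ha (by linarith)
    rwa [mul_comm (b ^ (-s)), add_comm b, add_comm (b ^ (-s))] at this
  rcases hb.eq_or_lt with rfl | hb
  · obtain rfl : a = 0 := by linarith
    simp [zero_rpow (neg_ne_zero.mpr hs.ne')]
  have hbig : b ^ (-s) ≤ 2 ^ s * (a + b) ^ (-s) := by
    calc b ^ (-s) ≤ ((a + b) / 2) ^ (-s) :=
          rpow_le_rpow_of_nonpos (by linarith) (by linarith) (by linarith)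
      _ = 2 ^ s * (a + b) ^ (-s) := by
          rw [div_rpow (by linarith) zero_le_two, rpow_neg zero_le_two, div_inv_eq_mul, mul_comm]
  have ha' : 0 ≤ a ^ (-s) := rpow_nonneg ha _
  have hb' : 0 ≤ b ^ (-s) := rpow_nonneg hb.le _
  calc a ^ (-s) * b ^ (-s) ≤ a ^ (-s) * (2 ^ s * (a + b) ^ (-s)) := by gcongr
    _ ≤ 2 ^ s * (a + b) ^ (-s) * (a ^ (-s) + b ^ (-s)) := by nlinarith

noncomputable def convolutionConstant (s : ℝ) : ℝ := 2 * 2 ^ s * ∑' n : ℕ, (n : ℝ) ^ (-s)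

lemma convolutionConstant_pos {s : ℝ} (hs : 1 < s) : 0 < convolutionConstant s := by
  have hsum : Summable fun n : ℕ => (n : ℝ) ^ (-s) := Real.summable_nat_rpow.mpr (by linarith)
  have : 0 < ∑' n : ℕ, (n : ℝ) ^ (-s) :=
    hsum.tsum_pos (fun n => rpow_nonneg n.cast_nonneg _) 1 (by simp)
  unfold convolutionConstant
  positivity

lemma sum_antidiagonal_rpow_neg_le {s : ℝ} (hs : 1 < s) (n : ℕ) :
    ∑ p ∈ antidiagonal n, (p.1 : ℝ) ^ (-s) * (p.2 : ℝ) ^ (-s) ≤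
      convolutionConstant s * (n : ℝ) ^ (-s) := by
  have hsum : Summable fun n : ℕ => (n : ℝ) ^ (-s) := Real.summable_nat_rpow.mpr (by linarith)
  have hpartial : ∑ p ∈ antidiagonal n, (p.1 : ℝ) ^ (-s) ≤ ∑' m : ℕ, (m : ℝ) ^ (-s) := by
    rw [Finset.Nat.sum_antidiagonal_eq_sum_range_succ_mk]
    exact hsum.sum_le_tsum _ fun m _ => rpow_nonneg m.cast_nonneg _
  have hswap : ∑ p ∈ antidiagonal n, (p.2 : ℝ) ^ (-s) = ∑ p ∈ antidiagonal n, (p.1 : ℝ) ^ (-s) :=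
    Finset.Nat.sum_antidiagonal_swap (f := fun p => (p.1 : ℝ) ^ (-s))
  calc ∑ p ∈ antidiagonal n, (p.1 : ℝ) ^ (-s) * (p.2 : ℝ) ^ (-s)
      ≤ ∑ p ∈ antidiagonal n, 2 ^ s * (n : ℝ) ^ (-s) * ((p.1 : ℝ) ^ (-s) + (p.2 : ℝ) ^ (-s)) := by
        refine sum_le_sum fun p hp => ?_
        rw [← HasAntidiagonal.mem_antidiagonal.mp hp, Nat.cast_add]
        exact mul_rpow_neg_le (by linarith) p.1.cast_nonneg p.2.cast_nonneg
    _ = 2 * 2 ^ s * (n : ℝ) ^ (-s) * ∑ p ∈ antidiagonal n, (p.1 : ℝ) ^ (-s) := by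
        rw [← mul_sum, sum_add_distrib, hswap]; ring
    _ ≤ convolutionConstant s * (n : ℝ) ^ (-s) := by
        rw [convolutionConstant, mul_right_comm]
        gcongr

noncomputable def compositionSum (s : ℝ) (k n : ℕ) : ℝ :=
  ∑ B ∈ Nat.antidiagonalTuple k n, ∏ i, (B i : ℝ) ^ (-s)

lemma compositionSum_nonneg (s : ℝ) (k n : ℕ) : 0 ≤ compositionSum s k n :=
  sum_nonneg fun B _ => prod_nonneg fun i _ => rpow_nonneg (B i).cast_nonneg _

lemma compositionSum_one (s : ℝ) (n : ℕ) : compositionSum s 1 n = (n : ℝ) ^ (-s) := by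
  simp [compositionSum, Nat.antidiagonalTuple_one]

lemma compositionSum_succ (s : ℝ) (k n : ℕ) :
    compositionSum s (k + 1) n =
      ∑ p ∈ antidiagonal n, (p.1 : ℝ) ^ (-s) * compositionSum s k p.2 := by
  simp only [compositionSum, Finset.Nat.sum_antidiagonalTuple_succ, Fin.prod_univ_succ,
    Fin.cons_zero, Fin.cons_succ, mul_sum]

lemma compositionSum_le {s : ℝ} (hs : 1 < s) (k n : ℕ) :
    compositionSum s (k + 1) n ≤ convolutionConstant s ^ k * (n : ℝ) ^ (-s) := by
  induction k generalizing n with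
  | zero => simp [compositionSum_one]
  | succ k ih =>
    calc compositionSum s (k + 2) n
        = ∑ p ∈ antidiagonal n, (p.1 : ℝ) ^ (-s) * compositionSum s (k + 1) p.2 :=
          compositionSum_succ s (k + 1) n
      _ ≤ ∑ p ∈ antidiagonal n,
            (p.1 : ℝ) ^ (-s) * (convolutionConstant s ^ k * (p.2 : ℝ) ^ (-s)) := by
          gcongr with p
          exact ih p.2
      _ = convolutionConstant s ^ k *
            ∑ p ∈ antidiagonal n, (p.1 : ℝ) ^ (-s) * (p.2 : ℝ) ^ (-s) := by
          rw [mul_sum]; congr 1 with p; ring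
      _ ≤ convolutionConstant s ^ (k + 1) * (n : ℝ) ^ (-s) := by
          rw [pow_succ, mul_assoc]
          exact mul_le_mul_of_nonneg_left (sum_antidiagonal_rpow_neg_le hs n)
            (pow_nonneg (convolutionConstant_pos hs).le k)

lemma tsum_compositions_eq {s : ℝ} (hs : s ≠ 0) (k n : ℕ) :
    ∑' B : Fin k → ℕ, (if (∀ i, 1 ≤ B i) ∧ ∑ i, B i = n then ∏ i, (B i : ℝ) ^ (-s) else 0) =
      compositionSum s k n := by
  rw [tsum_eq_sum (s := Nat.antidiagonalTuple k n)]
  · refine sum_congr rfl fun B hB => ?_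
    rw [Nat.mem_antidiagonalTuple] at hB
    by_cases hpos : ∀ i, 1 ≤ B i
    · rw [if_pos ⟨hpos, hB⟩]
    · -- a zero part contributes the factor `0 ^ (-s) = 0`
      obtain ⟨i, hi⟩ := not_forall.mp hpos
      rw [if_neg (fun h => hpos h.1), eq_comm]
      exact prod_eq_zero (mem_univ i) (by simp [Nat.lt_one_iff.mp (not_le.mp hi), hs])
  · intro B hB
    rw [Nat.mem_antidiagonalTuple] at hB
    exact if_neg fun h => hB h.2

lemma tsum_pow_mul_compositionSum_le {s ε : ℝ} (hs : 1 < s) (hε : 0 ≤ ε)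
    (hεA : ε * convolutionConstant s ≤ 1 / 2) (n : ℕ) :
    ∑' j : ℕ, ε ^ (j + 1) * compositionSum s (j + 1) n ≤ 2 * ε * (n : ℝ) ^ (-s) := by
  set q := ε * convolutionConstant s
  have hq0 : 0 ≤ q := mul_nonneg hε (convolutionConstant_pos hs).le
  have hq1 : q < 1 := by linarith
  have h0 : ∀ j, 0 ≤ ε ^ (j + 1) * compositionSum s (j + 1) n := fun j =>
    mul_nonneg (pow_nonneg hε _) (compositionSum_nonneg s _ n)
  have hle : ∀ j, ε ^ (j + 1) * compositionSum s (j + 1) n ≤ ε * (n : ℝ) ^ (-s) * q ^ j :=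
    fun j => calc
      ε ^ (j + 1) * compositionSum s (j + 1) n
          ≤ ε ^ (j + 1) * (convolutionConstant s ^ j * (n : ℝ) ^ (-s)) := by
            gcongr; exact compositionSum_le hs j n
      _ = ε * (n : ℝ) ^ (-s) * q ^ j := by rw [mul_pow]; ring
  have hg : Summable fun j => ε * (n : ℝ) ^ (-s) * q ^ j :=
    (summable_geometric_of_lt_one hq0 hq1).mul_left _
  calc ∑' j : ℕ, ε ^ (j + 1) * compositionSum s (j + 1) n
      ≤ ∑' j : ℕ, ε * (n : ℝ) ^ (-s) * q ^ j := (hg.of_nonneg_of_le h0 hle).tsum_le_tsum hle hg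
    _ = ε * (n : ℝ) ^ (-s) * (1 - q)⁻¹ := by rw [tsum_mul_left, tsum_geometric_of_lt_one hq0 hq1]
    _ ≤ ε * (n : ℝ) ^ (-s) * 2 := by
        gcongr
        rw [inv_le_comm₀ (by linarith) two_pos]
        linarith
    _ = 2 * ε * (n : ℝ) ^ (-s) := by ring

lemma tsum_ite_exp_mul_le {a c : ℝ} (ha : 0 < a) {f : ℕ → ℝ} (hf0 : ∀ t, 0 ≤ f t)
    (hf : ∀ t, 1 ≤ t → f t ≤ c) :
    ∑' t : ℕ, (if 1 ≤ t then exp (-a * t) * f t else 0) ≤ c * (1 - exp (-a))⁻¹ := by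
  set r := exp (-a)
  have hr0 : 0 ≤ r := (exp_pos _).le
  have hr1 : r < 1 := exp_lt_one_iff.mpr (by linarith)
  have hc : 0 ≤ c := (hf0 1).trans (hf 1 le_rfl)
  have hexp : ∀ t : ℕ, exp (-a * t) = r ^ t := fun t => by rw [mul_comm, exp_nat_mul]
  have h0 : ∀ t : ℕ, 0 ≤ if 1 ≤ t then exp (-a * t) * f t else 0 := fun t => by
    split_ifs
    · exact mul_nonneg (exp_pos _).le (hf0 t)
    · exact le_rfl
  have hle : ∀ t : ℕ, (if 1 ≤ t then exp (-a * t) * f t else 0) ≤ c * r ^ t := fun t => by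
    split_ifs with ht
    · rw [hexp, mul_comm]
      exact mul_le_mul_of_nonneg_right (hf t ht) (pow_nonneg hr0 t)
    · exact mul_nonneg hc (pow_nonneg hr0 t)
  have hg : Summable fun t : ℕ => c * r ^ t := (summable_geometric_of_lt_one hr0 hr1).mul_left c
  calc _ ≤ ∑' t : ℕ, c * r ^ t := (hg.of_nonneg_of_le h0 hle).tsum_le_tsum hle hg
    _ = c * (1 - r)⁻¹ := by rw [tsum_mul_left, tsum_geometric_of_lt_one hr0 hr1]

end BubbleSum

open BubbleSum in
theorem stmt_10_general (d : ℕ) (hd : 3 ≤ d) (ν : ℝ) :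
    ∃ η₀ > 0, ∀ η : ℝ, 0 < η → η ≤ η₀ → η < ν → ∃ C' : ℝ, ∀ K : ℕ,
      (∑' t : ℕ,
        (if 1 ≤ t then
          Real.exp (-(ν - η) * t) *
            ∑' j : ℕ, (Real.exp η - 1) ^ (j + 1) *
              ∑' B : Fin (j + 1) → ℕ,
                (if (∀ i, 1 ≤ B i) ∧ (∑ i, B i) = K + t then
                  ∏ i, ((B i : ℝ)) ^ (-(d : ℝ) / 2) else 0)
        else 0))
        ≤ C' * ((1 : ℝ) + K) ^ (-(d : ℝ) / 2) := by
  have hs : 1 < (d : ℝ) / 2 := by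
    have : (3 : ℝ) ≤ d := by exact_mod_cast hd
    linarith
  have hA := convolutionConstant_pos hs
  refine ⟨log (1 + (2 * convolutionConstant (d / 2))⁻¹), log_pos (by simp [hA]),
    fun η _ hηle hην => ⟨2 * (exp η - 1) * (1 - exp (-(ν - η)))⁻¹, fun K => ?_⟩⟩
  have hε : 0 ≤ exp η - 1 := by linarith [add_one_le_exp η]
  have hεA : (exp η - 1) * convolutionConstant (d / 2) ≤ 1 / 2 := by
    have : exp η ≤ 1 + (2 * convolutionConstant (d / 2))⁻¹ :=
      (le_log_iff_exp_le (by positivity)).mp hηle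
    calc (exp η - 1) * convolutionConstant (d / 2)
        ≤ (2 * convolutionConstant (d / 2))⁻¹ * convolutionConstant (d / 2) := by gcongr; linarith
      _ = 1 / 2 := by field_simp
  simp only [neg_div, tsum_compositions_eq (by linarith : (d : ℝ) / 2 ≠ 0)]
  calc _ ≤ 2 * (exp η - 1) * (1 + K : ℝ) ^ (-((d : ℝ) / 2)) * (1 - exp (-(ν - η)))⁻¹ := by
        refine tsum_ite_exp_mul_le (by linarith)
          (fun t => tsum_nonneg fun j => mul_nonneg (pow_nonneg hε _) (compositionSum_nonneg _ _ _))
          fun t ht => (tsum_pow_mul_compositionSum_le hs hε hεA (K + t)).trans ?_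
        refine mul_le_mul_of_nonneg_left (rpow_le_rpow_of_nonpos (by positivity) ?_ (by linarith))
          (by positivity)
        push_cast
        linarith [(Nat.one_le_cast (α := ℝ)).mpr ht]
    _ = _ := by ring

/-- Second bubble-summation estimate, giving the sharper bound `(1+K)^{-d/2}`: for
`d ≥ 3`, `ν > η > 0` with `η` sufficiently small,
`Σ_{t≥1} e^{-(ν-η)t} Σ_{i₀≥1} (e^η-1)^{i₀} Σ_{B_1+…+B_{i₀}=K+t, B_i≥1} Π B_i^{-d/2}
  ≤ C' (1+K)^{-d/2}` uniformly in `K ≥ 0`. -/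
theorem stmt_10 (d : ℕ) (hd : 3 ≤ d) (ν : ℝ) (hν : 0 < ν) :
    ∃ η₀ > 0, ∀ η : ℝ, 0 < η → η ≤ η₀ → η < ν → ∃ C' : ℝ, ∀ K : ℕ,
      (∑' t : ℕ,
        (if 1 ≤ t then
          Real.exp (-(ν - η) * t) *
            ∑' j : ℕ, (Real.exp η - 1) ^ (j + 1) *
              ∑' B : Fin (j + 1) → ℕ,
                (if (∀ i, 1 ≤ B i) ∧ (∑ i, B i) = K + t then
                  ∏ i, ((B i : ℝ)) ^ (-(d : ℝ) / 2) else 0)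
        else 0))
        ≤ C' * ((1 : ℝ) + K) ^ (-(d : ℝ) / 2) :=
  stmt_10_general d hd ν
end
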